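/- arXiv:1201.3554 — 2 statements merged into one kernel-verified Lean document; each statement's English description precedes it below -/
import Mathlib

section
/- Let $c > 0$, $a = (1-\sqrt{c})^2$, $b = (1+\sqrt{c})^2$, and let $p_c(x) = \frac{\sqrt{(x-a)(b-x)}}{2\pi x}$ for $a \le x \le b$ and $0$ otherwise. Then $\int_a^b p_c(x)\,dx = \min(c, 1)$. -/
/-!
The primitive
`√((x-a)(b-x)) + (a+b)/2 · arcsin((2x-a-b)/(b-a)) - √(ab) · arcsin(((a+b)x-2ab)/((b-a)x))`
of `√((x-a)(b-x))/x` gives `∫_a^b √((x-a)(b-x))/x dx = π((a+b)/2 - √(ab))`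
for `0 ≤ a < b` (for `a = 0` the last term vanishes). For the Marchenko-Pastur endpoints
`a + b = 2 + 2c` and `√(ab) = |1 - c|`, so the mass is `(1 + c - |1 - c|)/2 = min c 1`.
The integrand is nonnegative, which yields its integrability even at the singular endpoint
`x = 0` of the case `c = 1`.
-/

open Real Set

theorem integral_eq_sub_of_hasDerivAt_of_nonneg {f F : ℝ → ℝ} {a b : ℝ} (hab : a ≤ b)
    (hcont : ContinuousOn F (Icc a b)) (hderiv : ∀ x ∈ Ioo a b, HasDerivAt F (f x) x)
    (hf : ∀ x ∈ Ioo a b, 0 ≤ f x) :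
    ∫ x in a..b, f x = F b - F a :=
  intervalIntegral.integral_eq_sub_of_hasDerivAt_of_le hab hcont hderiv <|
    (intervalIntegrable_iff_integrableOn_Ioc_of_le hab).2 <|
      intervalIntegral.integrableOn_deriv_of_nonneg hcont hderiv hf

theorem HasDerivAt.arcsin_of_one_sub_sq_eq {g : ℝ → ℝ} {g' r x : ℝ} (hg : HasDerivAt g g' x)
    (hr : 0 < r) (hgr : 1 - g x ^ 2 = r ^ 2) :
    HasDerivAt (fun y => arcsin (g y)) (g' / r) x := by
  have hlt : g x ^ 2 < 1 := by nlinarith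
  have hne_neg : g x ≠ -1 := by rintro h; rw [h] at hlt; norm_num at hlt
  have hne : g x ≠ 1 := by rintro h; rw [h] at hlt; norm_num at hlt
  refine ((hasDerivAt_arcsin hne_neg hne).comp x hg).congr_deriv ?_
  rw [hgr, sqrt_sq hr.le]
  field_simp

section
variable {a b x : ℝ}

theorem hasDerivAt_sqrt_mul_sub (hxa : a < x) (hxb : x < b) :
    HasDerivAt (fun y => √((y - a) * (b - y)))
      ((a + b - 2 * x) / (2 * √((x - a) * (b - x)))) x := by
  have h := ((hasDerivAt_id' x).sub_const a).fun_mul ((hasDerivAt_id' x).const_sub b)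
  refine (h.sqrt (by nlinarith)).congr_deriv ?_
  ring

theorem hasDerivAt_arcsin_affine (hxa : a < x) (hxb : x < b) :
    HasDerivAt (fun y => arcsin ((2 * y - a - b) / (b - a))) (1 / √((x - a) * (b - x))) x := by
  have hba : 0 < b - a := sub_pos.2 (hxa.trans hxb)
  have hS2 : 0 < (x - a) * (b - x) := mul_pos (sub_pos.2 hxa) (sub_pos.2 hxb)
  have hS := sqrt_pos.2 hS2
  have hg := ((((hasDerivAt_id' x).const_mul 2).sub_const a).sub_const b).div_const (b - a)
  refine (hg.arcsin_of_one_sub_sq_eq (r := 2 * √((x - a) * (b - x)) / (b - a))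
    (by positivity) ?_).congr_deriv ?_
  · rw [div_pow, div_pow, mul_pow, sq_sqrt hS2.le]
    field_simp
    ring
  · field_simp

theorem hasDerivAt_arcsin_moebius (ha : 0 < a) (hxa : a < x) (hxb : x < b) :
    HasDerivAt (fun y => arcsin (((a + b) * y - 2 * a * b) / ((b - a) * y)))
      (√(a * b) / (x * √((x - a) * (b - x)))) x := by
  have hx : 0 < x := ha.trans hxa
  have hba : 0 < b - a := sub_pos.2 (hxa.trans hxb)
  have hS2 : 0 < (x - a) * (b - x) := mul_pos (sub_pos.2 hxa) (sub_pos.2 hxb)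
  have hS := sqrt_pos.2 hS2
  have hab0 : 0 < a * b := mul_pos ha (ha.trans (hxa.trans hxb))
  have hT := sqrt_pos.2 hab0
  have hg := (((hasDerivAt_id' x).const_mul (a + b)).sub_const (2 * a * b)).fun_div
    ((hasDerivAt_id' x).const_mul (b - a)) (by positivity)
  refine (hg.arcsin_of_one_sub_sq_eq (r := 2 * √(a * b) * √((x - a) * (b - x)) / ((b - a) * x))
    (by positivity) ?_).congr_deriv ?_
  · simp only [div_pow, mul_pow]
    rw [sq_sqrt hS2.le, sq_sqrt hab0.le]
    field_simp
    ring
  · field_simp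
    rw [sq_sqrt hab0.le]
    ring

theorem integral_sqrt_mul_sub_div_self_of_pos (ha : 0 < a) (hab : a < b) :
    ∫ x in a..b, √((x - a) * (b - x)) / x = π * ((a + b) / 2 - √(a * b)) := by
  have hba : 0 < b - a := sub_pos.2 hab
  have hb : 0 < b := ha.trans hab
  set F : ℝ → ℝ := fun x => √((x - a) * (b - x))
    + (a + b) / 2 * arcsin ((2 * x - a - b) / (b - a))
    - √(a * b) * arcsin (((a + b) * x - 2 * a * b) / ((b - a) * x)) with hF
  have hcont : ContinuousOn F (Icc a b) := by
    have : ∀ x ∈ Icc a b, (b - a) * x ≠ 0 := fun x hx => (mul_pos hba (ha.trans_le hx.1)).ne'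
    fun_prop (disch := assumption)
  have hderiv : ∀ x ∈ Ioo a b, HasDerivAt F (√((x - a) * (b - x)) / x) x := by
    rintro x ⟨hxa, hxb⟩
    have hx : x ≠ 0 := (ha.trans hxa).ne'
    have hS : √((x - a) * (b - x)) ≠ 0 :=
      (sqrt_pos.2 (mul_pos (sub_pos.2 hxa) (sub_pos.2 hxb))).ne'
    refine (((hasDerivAt_sqrt_mul_sub hxa hxb).add
      ((hasDerivAt_arcsin_affine hxa hxb).const_mul _)).sub
        ((hasDerivAt_arcsin_moebius ha hxa hxb).const_mul _)).congr_deriv ?_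
    field_simp
    rw [sq_sqrt (mul_pos ha (ha.trans hab)).le, sq_sqrt (by nlinarith)]
    ring
  rw [integral_eq_sub_of_hasDerivAt_of_nonneg hab.le hcont hderiv
    fun x hx => div_nonneg (sqrt_nonneg _) (ha.trans hx.1).le]
  have e1 : (2 * a - a - b) / (b - a) = -1 := by field_simp; ring
  have e2 : (2 * b - a - b) / (b - a) = 1 := by field_simp; ring
  have e3 : ((a + b) * a - 2 * a * b) / ((b - a) * a) = -1 := by field_simp; ring
  have e4 : ((a + b) * b - 2 * a * b) / ((b - a) * b) = 1 := by field_simp; ring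
  simp only [hF, e1, e2, e3, e4, sub_self, zero_mul, mul_zero, sqrt_zero, arcsin_one,
    arcsin_neg_one]
  ring

theorem integral_sqrt_mul_sub_div_self_zero (hb : 0 < b) :
    ∫ x in 0..b, √(x * (b - x)) / x = π * b / 2 := by
  set F : ℝ → ℝ := fun x => √(x * (b - x)) + b / 2 * arcsin ((2 * x - b) / b) with hF
  have hcont : ContinuousOn F (Icc 0 b) := by fun_prop
  have hderiv : ∀ x ∈ Ioo 0 b, HasDerivAt F (√(x * (b - x)) / x) x := by
    rintro x ⟨hx, hxb⟩
    have d1 := hasDerivAt_sqrt_mul_sub hx hxb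
    have d2 := hasDerivAt_arcsin_affine hx hxb
    simp only [sub_zero, zero_add] at d1 d2
    have hS : √(x * (b - x)) ≠ 0 := (sqrt_pos.2 (mul_pos hx (sub_pos.2 hxb))).ne'
    refine (d1.add (d2.const_mul _)).congr_deriv ?_
    field_simp
    rw [sq_sqrt (by nlinarith)]
    ring
  rw [integral_eq_sub_of_hasDerivAt_of_nonneg hb.le hcont hderiv
    fun x hx => div_nonneg (sqrt_nonneg _) hx.1.le]
  have e1 : (2 * 0 - b) / b = -1 := by field_simp; ring
  have e2 : (2 * b - b) / b = 1 := by field_simp; ring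
  simp only [hF]
  rw [e1, e2]
  simp only [sub_self, zero_mul, mul_zero, sqrt_zero, arcsin_one, arcsin_neg_one]
  ring

theorem integral_sqrt_mul_sub_div_self (ha : 0 ≤ a) (hab : a < b) :
    ∫ x in a..b, √((x - a) * (b - x)) / x = π * ((a + b) / 2 - √(a * b)) := by
  rcases ha.eq_or_lt with rfl | ha
  · simpa [mul_div_assoc] using integral_sqrt_mul_sub_div_self_zero hab
  · exact integral_sqrt_mul_sub_div_self_of_pos ha hab

end

/-- The density of the Marchenko-Pastur law with parameter `c > 0` has total mass
`min c 1` on its support `[a, b]` with `a = (1 - √c)²`, `b = (1 + √c)²`. -/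
theorem mp_density_total_mass (c : ℝ) (hc : 0 < c)
    (a b : ℝ) (ha : a = (1 - Real.sqrt c) ^ 2) (hb : b = (1 + Real.sqrt c) ^ 2) :
    ∫ x in a..b, Real.sqrt ((x - a) * (b - x)) / (2 * Real.pi * x) = min c 1 := by
  have hs : 0 < √c := sqrt_pos.2 hc
  have hsq : √c ^ 2 = c := sq_sqrt hc.le
  have hab : a < b := by rw [ha, hb]; nlinarith
  have hsum : a + b = 2 + 2 * c := by rw [ha, hb]; linear_combination 2 * hsq
  have hprod : √(a * b) = |1 - c| := by
    rw [ha, hb, ← mul_pow, sqrt_sq_eq_abs]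
    congr 1
    linear_combination -hsq
  simp_rw [div_mul_eq_div_div_swap]
  rw [intervalIntegral.integral_div, intervalIntegral.integral_div,
    integral_sqrt_mul_sub_div_self (ha ▸ sq_nonneg _) hab, hsum, hprod]
  field_simp
  linarith [min_add_max c 1, max_sub_min_eq_abs' c 1, abs_sub_comm c 1]
end

section
/- Let $c > 0$ and $z$ with $\operatorname{Im} z > 0$. Suppose $s_1, s_2 \in \mathbb{C}$ both satisfy the equation $z s^2 + s(z + 1 - c) + 1 = 0$ and both satisfy $\operatorname{Im}(z s_i) \ge 0$. Then $s_1 = s_2$. That is, the self-consistent Marchenko-Pastur equation has a unique solution with $\operatorname{Im}(zs) \ge 0$ in the upper half plane. -/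
/-- For `Im z > 0`, the self-consistent Marchenko–Pastur equation
`z s² + s (z + 1 - c) + 1 = 0` has at most one solution with `Im (z s) ≥ 0`. -/
theorem mp_equation_unique_solution (c : ℝ) (hc : 0 < c) (z : ℂ) (hz : 0 < z.im)
    (s₁ s₂ : ℂ)
    (h₁ : z * s₁ ^ 2 + s₁ * (z + 1 - (c : ℂ)) + 1 = 0)
    (h₂ : z * s₂ ^ 2 + s₂ * (z + 1 - (c : ℂ)) + 1 = 0)
    (him₁ : 0 ≤ (z * s₁).im) (him₂ : 0 ≤ (z * s₂).im) :
    s₁ = s₂ := by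
  by_contra hne
  have hz0 : z ≠ 0 := fun h => by simp [h] at hz
  have key : (z * s₁ - z * s₂) * (z * s₁ + z * s₂ + (z + 1 - (c : ℂ))) = 0 := by
    linear_combination z * h₁ - z * h₂
  rcases mul_eq_zero.mp key with h | h
  · exact hne (mul_left_cancel₀ hz0 (sub_eq_zero.mp h))
  · have hsum : z * s₁ + z * s₂ = (c : ℂ) - 1 - z := by linear_combination h
    have := congrArg Complex.im hsum
    simp only [Complex.add_im, Complex.sub_im, Complex.ofReal_im, Complex.one_im] at this
    linarith [him₁, him₂]
end
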